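/- arXiv:2410.15033 — 4 statements merged into one kernel-verified Lean document; each statement's English description precedes it below -/
import Mathlib

section
/- For the clipped ReLU function ReLU_β(x) = min(max(x, 0), β) with β > 0, and any scalar a with 0 < a < 1, one has ReLU_β((1/a)·ReLU_β(a·x)) = ReLU_β(x) for all real x. -/
/-- Clipped ReLU: `ReLU_β(x) = min(max(x,0), β)`. -/
def reluC (β x : ℝ) : ℝ := min (max x 0) β

/-- Scalar core of DynaMO's Theorem 1: for `0 < a < 1`,
`ReLU_β((1/a)·ReLU_β(a·x)) = ReLU_β(x)`. -/
theorem reluC_coupled_recovery (β a x : ℝ) (hβ : 0 < β) (ha0 : 0 < a) (ha1 : a < 1) :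
    reluC β (a⁻¹ * reluC β (a * x)) = reluC β x := by
  unfold reluC
  rcases le_or_gt x 0 with hx | hx
  · have hax : a * x ≤ 0 := mul_nonpos_of_nonneg_of_nonpos ha0.le hx
    rw [max_eq_right hax, min_eq_left hβ.le, mul_zero,
        max_eq_right le_rfl, min_eq_left hβ.le,
        max_eq_right hx, min_eq_left hβ.le]
  · rcases le_or_gt β (a * x) with hb | hb
    · have hxβ : β ≤ x := le_trans hb (by nlinarith)
      rw [max_eq_left (le_trans hβ.le hb), min_eq_right hb]
      have h1 : β ≤ a⁻¹ * β := by
        rw [le_inv_mul_iff₀ ha0]; nlinarith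
      rw [max_eq_left (le_trans hβ.le h1), min_eq_right h1,
          max_eq_left (le_trans hβ.le hxβ), min_eq_right hxβ]
    · have hax : 0 ≤ a * x := by positivity
      rw [max_eq_left hax, min_eq_left hb.le, inv_mul_cancel_left₀ ha0.ne']
end

section
/- Let f(x) = Wᵀx + b be an affine map and ReLU_β the clipped ReLU applied componentwise. If W and b are scaled to a·W and a·b with 0 < a < 1, yielding fˢ(x) = a·f(x), then for every input x, ReLU_β((1/a)·ReLU_β(fˢ(x))) = ReLU_β(f(x)) componentwise. -/
lemma reluC_key (β a y : ℝ) (hβ : 0 < β) (ha0 : 0 < a) (ha1 : a < 1) :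
    reluC β (a⁻¹ * reluC β (a * y)) = reluC β y := by
  unfold reluC
  have hβa : β ≤ a⁻¹ * β := by
    rw [← div_eq_inv_mul, le_div_iff₀ ha0]; nlinarith
  rcases le_or_gt y 0 with h | h
  · have h1 : a * y ≤ 0 := mul_nonpos_of_nonneg_of_nonpos ha0.le h
    rw [max_eq_right h1, min_eq_left hβ.le, mul_zero, max_eq_right h]
    simp [hβ.le]
  · rcases le_or_gt β (a * y) with h2 | h2
    · rw [max_eq_left (le_trans hβ.le h2), min_eq_right h2,
        max_eq_left (by positivity : (0:ℝ) ≤ a⁻¹ * β), min_eq_right hβa,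
        max_eq_left h.le, min_eq_right (by nlinarith)]
    · rw [max_eq_left (by positivity : (0:ℝ) ≤ a * y), min_eq_left h2.le,
        ← mul_assoc, inv_mul_cancel₀ ha0.ne', one_mul]

/-- Theorem 1 of DynaMO for a single affine layer `f(x) = Wᵀx + b`:
if all weights and biases are scaled by `a ∈ (0,1)`, giving `fˢ(x) = a·f(x)`,
then `ReLU_β((1/a)·ReLU_β(fˢ(x))) = ReLU_β(f(x))` componentwise. -/
theorem coupled_weights_obfuscation_affine (n m : ℕ) (β a : ℝ)
    (hβ : 0 < β) (ha0 : 0 < a) (ha1 : a < 1)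
    (W : Matrix (Fin n) (Fin m) ℝ) (b : Fin m → ℝ) (x : Fin n → ℝ) :
    ∀ i : Fin m,
      reluC β (a⁻¹ * reluC β (((a • W).transpose.mulVec x + a • b) i)) =
        reluC β ((W.transpose.mulVec x + b) i) := by
  intro i
  have h : ((a • W).transpose.mulVec x + a • b) i =
      a * ((W.transpose.mulVec x + b) i) := by
    simp [Matrix.mulVec, Matrix.transpose_apply, dotProduct, Finset.mul_sum,
      mul_add, mul_comm, mul_left_comm]
  rw [h, reluC_key β a _ hβ ha0 ha1]
end

section
/- Let f be a composition of n affine layers with scalars chosen per DynaMO: W₁ ↦ a·W₁, Wₙ ↦ (1/a)·Wₙ, bᵢ ↦ a·bᵢ for i ∈ [1, n−1]. Then every intermediate activation of the transformed network equals a times the corresponding intermediate activation of the original network: Xᵢˢ = a·Xᵢ for all i ∈ [1, n−1], while Xₙˢ = Xₙ. -/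
/-- Evaluate the composition of the first `n` affine layers:
layer `k` maps `x` to `(W k)ᵀ x + b k`. -/
def evalNet (d : ℕ) (W : ℕ → Matrix (Fin d) (Fin d) ℝ) (b : ℕ → Fin d → ℝ) :
    ℕ → (Fin d → ℝ) → (Fin d → ℝ)
  | 0, x => x
  | (k+1), x => (W k).transpose.mulVec (evalNet d W b k x) + b k

/-- Strengthened Lemma 1 of DynaMO: under the coupled weight transformation
(`W₁ ↦ a·W₁`, `Wₙ ↦ (1/a)·Wₙ`, `bᵢ ↦ a·bᵢ` for `i ∈ [1, n−1]`), every
intermediate activation `Xᵢˢ` (for `1 ≤ i ≤ n−1`) equals `a · Xᵢ`, while the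
final output satisfies `Xₙˢ = Xₙ`. -/
theorem coupled_transformation_intermediates (d n : ℕ) (hn : 1 ≤ n)
    (W : ℕ → Matrix (Fin d) (Fin d) ℝ) (b : ℕ → Fin d → ℝ)
    (a : ℝ) (ha : a ≠ 0)
    (W' : ℕ → Matrix (Fin d) (Fin d) ℝ) (b' : ℕ → Fin d → ℝ)
    (hW' : ∀ k, W' k = ((if k = 0 then a else 1) * (if k = n - 1 then a⁻¹ else 1)) • W k)
    (hb' : ∀ k, b' k = (if k < n - 1 then a else (1:ℝ)) • b k) :
    ∀ x : Fin d → ℝ,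
      (∀ i, 1 ≤ i → i ≤ n - 1 → evalNet d W' b' i x = a • evalNet d W b i x) ∧
      evalNet d W' b' n x = evalNet d W b n x := by
  intro x
  have key : ∀ i, 1 ≤ i → i ≤ n - 1 → evalNet d W' b' i x = a • evalNet d W b i x := by
    intro i hi1 hi2
    induction i with
    | zero => omega
    | succ k ih =>
      show (W' k).transpose.mulVec (evalNet d W' b' k x) + b' k = _
      rcases Nat.eq_zero_or_pos k with hk | hk
      · subst hk
        have hkn : (0:ℕ) ≠ n - 1 := by omega
        have hW0 : W' 0 = a • W 0 := by
          rw [hW']; simp [hkn]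
        have hb0 : b' 0 = a • b 0 := by
          rw [hb']; simp [show 0 < n - 1 by omega]
        simp [evalNet, hW0, hb0, Matrix.transpose_smul, Matrix.smul_mulVec,
          smul_add]
      · have hkn0 : k ≠ 0 := by omega
        have hkn : k ≠ n - 1 := by omega
        have hWk : W' k = W k := by rw [hW']; simp [hkn0, hkn]
        have hbk : b' k = a • b k := by rw [hb']; simp [show k < n - 1 by omega]
        have ihk := ih (by omega) (by omega)
        rw [ihk, hWk, hbk]
        show _ = a • ((W k).transpose.mulVec (evalNet d W b k x) + b k)
        rw [smul_add, Matrix.mulVec_smul]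
  refine ⟨key, ?_⟩
  rcases Nat.eq_or_lt_of_le hn with h1 | h2
  · -- n = 1
    have hn1 : n = 1 := h1.symm
    subst hn1
    have hW0 : W' 0 = W 0 := by
      rw [hW']; simp [mul_inv_cancel₀ ha]
    have hb0 : b' 0 = b 0 := by rw [hb']; simp
    simp [evalNet, hW0, hb0]
  · -- n ≥ 2
    have hn2 : 2 ≤ n := h2
    obtain ⟨m, rfl⟩ : ∃ m, n = m + 1 := ⟨n - 1, by omega⟩
    have hm1 : 1 ≤ m := by omega
    have hWm : W' m = a⁻¹ • W m := by
      rw [hW']; simp [show m ≠ 0 by omega]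
    have hbm : b' m = b m := by rw [hb']; simp
    have hint := key m hm1 (by omega)
    show (W' m).transpose.mulVec (evalNet d W' b' m x) + b' m
        = (W m).transpose.mulVec (evalNet d W b m x) + b m
    rw [hint, hWm, hbm, Matrix.transpose_smul, Matrix.smul_mulVec,
      Matrix.mulVec_smul, smul_smul, inv_mul_cancel₀ ha, one_smul]
end

section
/- Two DynaMO obfuscation pairs compose: if a network's output is invariant under the coupled transformation with scalar a on layers (i, j) and invariant under the coupled transformation with scalar a' on layers (k, l), where the two propagation paths [i, j] and [k, l] are disjoint, then applying both transformations simultaneously also leaves the network's output unchanged for every input. -/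
/-- Coupled transformation of the weights with scalar `a` on the path `(i, j)`:
`Wᵢ ↦ a·Wᵢ`, `W_j ↦ (1/a)·W_j`. -/
noncomputable def coupledW (d : ℕ) (a : ℝ) (i j : ℕ) (W : ℕ → Matrix (Fin d) (Fin d) ℝ) :
    ℕ → Matrix (Fin d) (Fin d) ℝ :=
  fun m => ((if m = i then a else 1) * (if m = j then a⁻¹ else 1)) • W m

/-- Coupled transformation of the biases with scalar `a` on the path `(i, j)`:
`b_m ↦ a·b_m` for `i ≤ m < j`. -/
def coupledB (d : ℕ) (a : ℝ) (i j : ℕ) (b : ℕ → Fin d → ℝ) : ℕ → Fin d → ℝ :=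
  fun m => (if i ≤ m ∧ m < j then a else (1:ℝ)) • b m

/-!
With `a ≠ 0` the coupled transformation on `(i, j)` multiplies the state after layer `m` by `a`
for `i < m ≤ j` and leaves it unchanged otherwise; in particular it rescales the output by a
fixed scalar `c`. Applying such a transformation on top of an invariant one therefore multiplies
the unchanged output by the same `c`, and invariance of the second transformation alone says
that `c` fixes the output. With `a = 0` the transformation zeroes the weight of layer `i`, so the
network forgets everything computed before layer `i`; on disjoint paths the earlier
transformation lives entirely before that layer (or entirely beyond the output).
-/

section Locality

variable {d : ℕ} {W W' : ℕ → Matrix (Fin d) (Fin d) ℝ} {b b' : ℕ → Fin d → ℝ}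

theorem evalNet_congr_Ico {k n : ℕ} {x x' : Fin d → ℝ} (hkn : k ≤ n)
    (h₀ : evalNet d W b k x = evalNet d W' b' k x')
    (hW : ∀ m, k ≤ m → m < n → W m = W' m) (hb : ∀ m, k ≤ m → m < n → b m = b' m) :
    evalNet d W b n x = evalNet d W' b' n x' := by
  induction n, hkn using Nat.le_induction with
  | base => exact h₀
  | succ n hkn ih =>
    have hlt := n.lt_succ_self
    rw [evalNet, evalNet, ih (fun m hk hm => hW m hk (hm.trans hlt))
      (fun m hk hm => hb m hk (hm.trans hlt)), hW n hkn hlt, hb n hkn hlt]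

theorem evalNet_succ_of_weight_eq_zero {k : ℕ} (hk : W k = 0) (x : Fin d → ℝ) :
    evalNet d W b (k + 1) x = b k := by
  simp [evalNet, hk]

end Locality

section Coupled

variable {d : ℕ} (a : ℝ) {i j : ℕ} (W : ℕ → Matrix (Fin d) (Fin d) ℝ) (b : ℕ → Fin d → ℝ)

theorem coupledW_apply_of_ne {m : ℕ} (hi : m ≠ i) (hj : m ≠ j) : coupledW d a i j W m = W m := by
  simp [coupledW, hi, hj]

theorem coupledW_zero_apply_left : coupledW d 0 i j W i = 0 := by
  simp [coupledW]

theorem coupledB_apply_of_not_mem {m : ℕ} (hm : ¬(i ≤ m ∧ m < j)) : coupledB d a i j b m = b m := by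
  simp [coupledB, hm]

theorem coupledW_comm (a' : ℝ) (k l : ℕ) :
    coupledW d a' k l (coupledW d a i j W) = coupledW d a i j (coupledW d a' k l W) := by
  funext m
  simp only [coupledW, smul_smul, mul_comm]

theorem coupledB_comm (a' : ℝ) (k l : ℕ) :
    coupledB d a' k l (coupledB d a i j b) = coupledB d a i j (coupledB d a' k l b) := by
  funext m
  simp only [coupledB, smul_smul, mul_comm]

variable {a}

theorem evalNet_coupled (ha : a ≠ 0) (hij : i ≤ j) (m : ℕ) (x : Fin d → ℝ) :
    evalNet d (coupledW d a i j W) (coupledB d a i j b) m x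
      = (if i < m ∧ m ≤ j then a else 1) • evalNet d W b m x := by
  induction m with
  | zero => simp [evalNet]
  | succ m ih =>
    rw [evalNet, evalNet, ih, coupledW, coupledB, Matrix.transpose_smul, Matrix.smul_mulVec,
      Matrix.mulVec_smul, smul_add, smul_smul]
    congr 2
    · split_ifs <;> first | rfl | omega | field_simp
    · split_ifs <;> first | rfl | omega

end Coupled

section Composition

variable {d n : ℕ} {W : ℕ → Matrix (Fin d) (Fin d) ℝ} {b : ℕ → Fin d → ℝ} {a a' : ℝ}
  {i j k l : ℕ} {x : Fin d → ℝ}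

theorem evalNet_coupled_coupled_of_ne_zero (ha' : a' ≠ 0) (hkl : k ≤ l)
    (h₁ : evalNet d (coupledW d a i j W) (coupledB d a i j b) n x = evalNet d W b n x)
    (h₂ : evalNet d (coupledW d a' k l W) (coupledB d a' k l b) n x = evalNet d W b n x) :
    evalNet d (coupledW d a' k l (coupledW d a i j W)) (coupledB d a' k l (coupledB d a i j b))
      n x = evalNet d W b n x := by
  set c : ℝ := if k < n ∧ n ≤ l then a' else 1
  calc _ = c • evalNet d (coupledW d a i j W) (coupledB d a i j b) n x :=
        evalNet_coupled _ _ ha' hkl n x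
    _ = c • evalNet d W b n x := by rw [h₁]
    _ = evalNet d (coupledW d a' k l W) (coupledB d a' k l b) n x :=
        (evalNet_coupled W b ha' hkl n x).symm
    _ = evalNet d W b n x := h₂

theorem evalNet_coupled_zero_coupled_of_lt (hij : i ≤ j) (hjk : j < k) (hkl : k ≤ l)
    (h₁ : evalNet d (coupledW d a i j W) (coupledB d a i j b) n x = evalNet d W b n x)
    (h₂ : evalNet d (coupledW d 0 k l W) (coupledB d 0 k l b) n x = evalNet d W b n x) :
    evalNet d (coupledW d 0 k l (coupledW d a i j W)) (coupledB d 0 k l (coupledB d a i j b))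
      n x = evalNet d W b n x := by
  rcases lt_or_ge k n with hkn | hnk
  · rw [← h₂]
    refine evalNet_congr_Ico hkn ?_ (fun m hm _ => ?_) (fun m hm _ => ?_)
    · rw [evalNet_succ_of_weight_eq_zero (coupledW_zero_apply_left _),
        evalNet_succ_of_weight_eq_zero (coupledW_zero_apply_left _)]
      simp [coupledB, show ¬(i ≤ k ∧ k < j) by omega]
    · simp [coupledW, show m ≠ i by omega, show m ≠ j by omega]
    · simp [coupledB, show ¬(i ≤ m ∧ m < j) by omega]
  · rw [← h₁]
    refine evalNet_congr_Ico n.zero_le rfl (fun m _ hm => ?_) (fun m _ hm => ?_)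
    · exact coupledW_apply_of_ne _ _ (by omega) (by omega)
    · exact coupledB_apply_of_not_mem _ _ (by omega)

end Composition

/-- Two DynaMO obfuscation pairs on disjoint propagation paths compose: if the
network output is invariant under the coupled transformation with scalar `a`
on path `(i, j)` and under the coupled transformation with scalar `a'` on path
`(k, l)`, and the paths `[i, j]` and `[k, l]` are disjoint, then applying both
transformations simultaneously also leaves the output unchanged. -/
theorem disjoint_obfuscation_pairs_compose (d n : ℕ)
    (W : ℕ → Matrix (Fin d) (Fin d) ℝ) (b : ℕ → Fin d → ℝ)
    (a a' : ℝ) (i j k l : ℕ) (hij : i ≤ j) (hkl : k ≤ l)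
    (hdisj : j < k ∨ l < i)
    (h1 : ∀ x, evalNet d (coupledW d a i j W) (coupledB d a i j b) n x = evalNet d W b n x)
    (h2 : ∀ x, evalNet d (coupledW d a' k l W) (coupledB d a' k l b) n x = evalNet d W b n x) :
    ∀ x, evalNet d (coupledW d a' k l (coupledW d a i j W))
        (coupledB d a' k l (coupledB d a i j b)) n x = evalNet d W b n x := by
  intro x
  rcases hdisj with hjk | hli
  · by_cases ha' : a' = 0
    · subst ha'
      exact evalNet_coupled_zero_coupled_of_lt hij hjk hkl (h1 x) (h2 x)
    · exact evalNet_coupled_coupled_of_ne_zero ha' hkl (h1 x) (h2 x)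
  · rw [coupledW_comm, coupledB_comm]
    by_cases ha : a = 0
    · subst ha
      exact evalNet_coupled_zero_coupled_of_lt hkl hli hij (h2 x) (h1 x)
    · exact evalNet_coupled_coupled_of_ne_zero ha hij (h2 x) (h1 x)
end
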